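/- Let a : ℤ → ℂ be not generic, let v ∈ a^⊥ be nonzero with ω(v) = m minimal among all nonzero elements of a^⊥. Then the family consisting of all integer shifts (v^{(n)})_{n∈ℤ} together with the standard basis vectors v_0, v_1, …, v_{m−1} (the indicator functions of 0, 1, …, m−1; an empty collection when m = 0) is a basis of V = ℤ →₀ ℂ. -/

import Mathlib

/-- For `x : ℤ → ℂ` and `n : ℤ`, the shift `x^{(n)}` is `i ↦ x (i + n)`. -/
def shiftFun (a : ℤ → ℂ) (n : ℤ) : ℤ → ℂ := fun i => a (i + n)

/-- The shift of a finitely supported function `v : ℤ →₀ ℂ`: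
`(shiftV v n) i = v (i + n)`. -/
noncomputable def shiftV (v : ℤ →₀ ℂ) (n : ℤ) : ℤ →₀ ℂ :=
  Finsupp.equivMapDomain (Equiv.addRight n).symm v

/-- The shift, as a linear map. -/
noncomputable def shiftVL (n : ℤ) : (ℤ →₀ ℂ) →ₗ[ℂ] (ℤ →₀ ℂ) :=
  (Finsupp.domLCongr (Equiv.addRight n).symm).toLinearMap

/-- `a^⊥`: the subspace of all `v ∈ ℤ →₀ ℂ` such that `⟨a, v^{(n)}⟩ = 0` for all
`n ∈ ℤ`, where `⟨a, w⟩ = ∑ i, a i * w i`. -/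
noncomputable def perp (a : ℤ → ℂ) : Submodule ℂ (ℤ →₀ ℂ) :=
  ⨅ n : ℤ, LinearMap.ker ((Finsupp.linearCombination ℂ a).comp (shiftVL n))

/-- `ω(v) = r(v) - l(v)`, the difference between the maximum and the minimum of
the support of `v` (junk value `0` for `v = 0`). -/
noncomputable def omegaV (v : ℤ →₀ ℂ) : ℕ :=
  ((WithBot.unbotD 0 v.support.max) - (WithTop.untopD 0 v.support.min)).toNat

/-!
Write `l` and `l + m` for the ends of the support of `v`, so `m = ω(v)`. The shifts of `v` are
independent because the shift with the smallest index is the only one reaching furthest right.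
Together with `v_0, …, v_{m-1}` they span: a shift of `v` whose left (right) end sits at `i`
expresses `v_i` through `v_j` with `i < j ≤ i + m` (`i - m ≤ j < i`), so all `v_i` are reached
from the window `[0, m)` outwards. Finally, the shifts of `v` span a subspace of `a^⊥`, and a
nonzero vector supported in `[0, m)` has `ω < m`, so by minimality of `m` it is not in `a^⊥`.
-/

open Finsupp Submodule Set

@[simp]
lemma shiftV_apply (v : ℤ →₀ ℂ) (n i : ℤ) : shiftV v n i = v (i + n) := by
  simp [shiftV, equivMapDomain_apply]

lemma shiftVL_apply (n : ℤ) (w : ℤ →₀ ℂ) : shiftVL n w = shiftV w n := by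
  ext i
  simp [shiftVL]

lemma shiftV_shiftV (v : ℤ →₀ ℂ) (k n : ℤ) : shiftV (shiftV v k) n = shiftV v (n + k) := by
  ext i
  simp [add_assoc]

lemma shiftV_mem_perp {a : ℤ → ℂ} {v : ℤ →₀ ℂ} (hv : v ∈ perp a) (k : ℤ) :
    shiftV v k ∈ perp a := by
  simp only [perp, mem_iInf, LinearMap.mem_ker, LinearMap.comp_apply, shiftVL_apply,
    shiftV_shiftV] at hv ⊢
  exact fun n => hv (n + k)

lemma span_range_shiftV_le_perp {a : ℤ → ℂ} {v : ℤ →₀ ℂ} (hv : v ∈ perp a) :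
    span ℂ (range (shiftV v)) ≤ perp a :=
  span_le.mpr <| range_subset_iff.mpr (shiftV_mem_perp hv)

lemma exists_support_subset_Icc_omegaV {v : ℤ →₀ ℂ} (hv0 : v ≠ 0) :
    ∃ l : ℤ, v l ≠ 0 ∧ v (l + omegaV v) ≠ 0 ∧ ∀ j, v j ≠ 0 → l ≤ j ∧ j ≤ l + omegaV v := by
  have hne : v.support.Nonempty := support_nonempty_iff.mpr hv0
  have hω : (omegaV v : ℤ) = v.support.max' hne - v.support.min' hne := by
    have := v.support.min'_le_max' hne
    rw [omegaV, ← Finset.coe_max' hne, ← Finset.coe_min' hne]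
    exact Int.toNat_of_nonneg (by simpa using this)
  refine ⟨v.support.min' hne, mem_support_iff.mp (v.support.min'_mem hne), ?_, fun j hj => ?_⟩
  · rw [hω, add_sub_cancel]
    exact mem_support_iff.mp (v.support.max'_mem hne)
  · have := v.support.min'_le j (mem_support_iff.mpr hj)
    have := v.support.le_max' j (mem_support_iff.mpr hj)
    omega

lemma omegaV_lt_of_mem_supported_Ico {m : ℕ} {w : ℤ →₀ ℂ} (hw0 : w ≠ 0)
    (hw : w ∈ supported ℂ ℂ (Ico 0 (m : ℤ))) : omegaV w < m := by
  obtain ⟨l, hl, hr, -⟩ := exists_support_subset_Icc_omegaV hw0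
  have hl' := hw (mem_support_iff.mpr hl)
  have hr' := hw (mem_support_iff.mpr hr)
  simp only [mem_Ico] at hl' hr'
  omega

lemma disjoint_supported_Ico_of_le_omegaV {P : Submodule ℂ (ℤ →₀ ℂ)} {m : ℕ}
    (h : ∀ w ∈ P, w ≠ 0 → m ≤ omegaV w) : Disjoint P (supported ℂ ℂ (Ico 0 (m : ℤ))) := by
  refine disjoint_def.mpr fun w hwP hw => ?_
  by_contra hw0
  exact (h w hwP hw0).not_gt (omegaV_lt_of_mem_supported_Ico hw0 hw)

lemma linearIndependent_shiftV {v : ℤ →₀ ℂ} (hv0 : v ≠ 0) : LinearIndependent ℂ (shiftV v) := by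
  obtain ⟨l, -, hr, hsupp⟩ := exists_support_subset_Icc_omegaV hv0
  refine linearIndependent_iff.mpr fun c hc => ?_
  by_contra hc0
  have hcs : c.support.Nonempty := support_nonempty_iff.mpr hc0
  set p := c.support.min' hcs
  have hp : c p ≠ 0 := mem_support_iff.mp (c.support.min'_mem hcs)
  have heval := congr($hc (l + omegaV v - p))
  simp only [linearCombination_apply, Finsupp.sum, finsetSum_apply, Finsupp.smul_apply,
    shiftV_apply, smul_eq_mul, Finsupp.coe_zero, Pi.zero_apply] at heval
  rw [Finset.sum_eq_single_of_mem p (c.support.min'_mem hcs), sub_add_cancel] at heval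
  · exact mul_ne_zero hp hr heval
  · intro n hn hnp
    have hpn : p < n := lt_of_le_of_ne (c.support.min'_le n hn) (Ne.symm hnp)
    by_contra h
    have := (hsupp _ (right_ne_zero_of_mul h)).2
    omega

lemma linearIndependent_single_natCast (m : ℕ) :
    LinearIndependent ℂ (fun k : Fin m => single ((k : ℕ) : ℤ) (1 : ℂ)) := by
  have hinj : Function.Injective (fun k : Fin m => ((k : ℕ) : ℤ)) := fun x y h => by
    simpa [Fin.ext_iff] using h
  simpa [Function.comp_def] using
    (Finsupp.basisSingleOne (R := ℂ) (ι := ℤ)).linearIndependent.comp _ hinj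

lemma span_single_natCast_le_supported_Ico (m : ℕ) :
    span ℂ (range fun k : Fin m => single ((k : ℕ) : ℤ) (1 : ℂ)) ≤
      supported ℂ ℂ (Ico 0 (m : ℤ)) := by
  rw [supported_eq_span_single]
  refine span_mono ?_
  rintro _ ⟨k, rfl⟩
  exact ⟨k, ⟨by positivity, by exact_mod_cast k.2⟩, rfl⟩

lemma single_one_mem_of_apply_ne_zero {K ι : Type*} [Field K] {S : Submodule K (ι →₀ K)}
    {w : ι →₀ K} {i : ι} (hw : w ∈ S) (hi : w i ≠ 0)
    (hS : ∀ j, w j ≠ 0 → j ≠ i → single j 1 ∈ S) : single i 1 ∈ S := by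
  have herase : w.erase i ∈ S := by
    have hsupp : w.erase i ∈ supported K K {j | w j ≠ 0 ∧ j ≠ i} := fun j hj => by
      by_cases hji : j = i
      · simp [hji] at hj
      · simpa [erase_ne hji, hji] using hj
    rw [supported_eq_span_single] at hsupp
    refine span_le.mpr ?_ hsupp
    rintro _ ⟨j, hj, rfl⟩
    exact hS j hj.1 hj.2
  have hsingle : single i (w i) ∈ S := by
    rw [← add_sub_cancel_right (single i (w i)) (w.erase i), single_add_erase]
    exact sub_mem hw herase
  simpa [smul_single, hi] using S.smul_mem (w i)⁻¹ hsingle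

section Spanning

variable {v : ℤ →₀ ℂ} {S : Submodule ℂ (ℤ →₀ ℂ)}

lemma single_one_mem_of_shiftV_left (hv0 : v ≠ 0) (hS : ∀ n, shiftV v n ∈ S) (i : ℤ)
    (h : ∀ j, i < j → j ≤ i + omegaV v → single j 1 ∈ S) : single i 1 ∈ S := by
  obtain ⟨l, hl, -, hsupp⟩ := exists_support_subset_Icc_omegaV hv0
  refine single_one_mem_of_apply_ne_zero (hS (l - i)) (by simpa using hl) fun j hj hji => ?_
  have := hsupp _ (by simpa using hj)
  exact h j (by omega) (by omega)

lemma single_one_mem_of_shiftV_right (hv0 : v ≠ 0) (hS : ∀ n, shiftV v n ∈ S) (i : ℤ)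
    (h : ∀ j, i - omegaV v ≤ j → j < i → single j 1 ∈ S) : single i 1 ∈ S := by
  obtain ⟨l, -, hr, hsupp⟩ := exists_support_subset_Icc_omegaV hv0
  refine single_one_mem_of_apply_ne_zero (hS (l + omegaV v - i)) (by simpa using hr)
    fun j hj hji => ?_
  have := hsupp _ (by simpa using hj)
  exact h j (by omega) (by omega)

lemma single_one_mem_of_shiftV_mem (hv0 : v ≠ 0) (hS : ∀ n, shiftV v n ∈ S)
    (h0 : ∀ k : ℕ, k < omegaV v → single (k : ℤ) 1 ∈ S) (i : ℤ) : single i 1 ∈ S := by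
  suffices hband : ∀ N : ℕ, ∀ i : ℤ, -N ≤ i → i < omegaV v + N → single i 1 ∈ S from
    hband (i.natAbs + 1) i (by omega) (by omega)
  intro N
  induction N with
  | zero =>
    intro i h1 h2
    lift i to ℕ using (by omega)
    exact h0 i (by omega)
  | succ N ih =>
    intro i h1 h2
    by_cases hi : -(N : ℤ) ≤ i ∧ i < omegaV v + N
    · exact ih i hi.1 hi.2
    by_cases hleft : i < 0
    · exact single_one_mem_of_shiftV_left hv0 hS i fun j _ _ => ih j (by omega) (by omega)
    · exact single_one_mem_of_shiftV_right hv0 hS i fun j _ _ => ih j (by omega) (by omega)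

lemma span_shiftV_sum_single_eq_top (hv0 : v ≠ 0) :
    span ℂ (range (Sum.elim (shiftV v) fun k : Fin (omegaV v) => single ((k : ℕ) : ℤ) (1 : ℂ)))
      = ⊤ := by
  rw [eq_top_iff, ← (Finsupp.basisSingleOne (R := ℂ) (ι := ℤ)).span_eq, span_le,
    coe_basisSingleOne]
  rintro _ ⟨i, rfl⟩
  refine single_one_mem_of_shiftV_mem hv0 (fun n => subset_span ?_) (fun k hk => subset_span ?_) i
  exacts [⟨Sum.inl n, rfl⟩, ⟨Sum.inr ⟨k, hk⟩, rfl⟩]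

end Spanning

theorem shifts_extend_to_basis_general (a : ℤ → ℂ)
    (v : ℤ →₀ ℂ) (hv : v ∈ perp a) (hv0 : v ≠ 0)
    (hmin : ∀ w ∈ perp a, w ≠ 0 → omegaV v ≤ omegaV w) :
    LinearIndependent ℂ
      (Sum.elim (fun n : ℤ => shiftV v n)
        (fun k : Fin (omegaV v) => Finsupp.single ((k : ℕ) : ℤ) (1 : ℂ))) ∧
    Submodule.span ℂ
      (Set.range (Sum.elim (fun n : ℤ => shiftV v n)
        (fun k : Fin (omegaV v) => Finsupp.single ((k : ℕ) : ℤ) (1 : ℂ)))) = ⊤ := by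
  have hdisj := (disjoint_supported_Ico_of_le_omegaV hmin).mono
    (span_range_shiftV_le_perp hv) (span_single_natCast_le_supported_Ico (omegaV v))
  exact ⟨(linearIndependent_shiftV hv0).sum_type (linearIndependent_single_natCast _) hdisj,
    span_shiftV_sum_single_eq_top hv0⟩

/-- If `a` is not generic and `v ∈ a^⊥` is nonzero with `ω(v) = m` minimal, then
the integer shifts of `v` together with the standard basis vectors
`v_0, …, v_{m-1}` form a basis of `ℤ →₀ ℂ`. -/
theorem shifts_extend_to_basis (a : ℤ → ℂ)
    (ha : ¬ LinearIndependent ℂ (fun n : ℤ => shiftFun a n))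
    (v : ℤ →₀ ℂ) (hv : v ∈ perp a) (hv0 : v ≠ 0)
    (hmin : ∀ w ∈ perp a, w ≠ 0 → omegaV v ≤ omegaV w) :
    LinearIndependent ℂ
      (Sum.elim (fun n : ℤ => shiftV v n)
        (fun k : Fin (omegaV v) => Finsupp.single ((k : ℕ) : ℤ) (1 : ℂ))) ∧
    Submodule.span ℂ
      (Set.range (Sum.elim (fun n : ℤ => shiftV v n)
        (fun k : Fin (omegaV v) => Finsupp.single ((k : ℕ) : ℤ) (1 : ℂ)))) = ⊤ :=
  shifts_extend_to_basis_general a v hv hv0 hmin
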